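/- arXiv:2306.04623 — 2 statements merged into one kernel-verified Lean document; each statement's English description precedes it below -/
import Mathlib

section
/- Let M = Γ(G,u) be an MV-algebra (G an abelian lattice-ordered group with strong unit u) with a square root r. Then (G,u) is isomorphic, as a unital lattice-ordered group, to a direct product (G₁ × G₂, (u₁,u₂)) of unital lattice-ordered groups (G₁,u₁) and (G₂,u₂), where G₁ admits an injective lattice-group homomorphism into a direct product ∏_{p∈X} ℤ of copies of the integers (with surjective coordinate maps, i.e., G₁ is a subdirect product of copies of (ℤ,1)), and G₂ is a two-divisible lattice-ordered group. -/
section Core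

variable {G : Type} [Lattice G] [AddGroup G]

/-- `u` is a strong unit of the ℓ-group `G`. -/
def IsStrongUnit (u : G) : Prop :=
  0 ≤ u ∧ ∀ g : G, ∃ n : ℕ, 1 ≤ n ∧ g ≤ n • u

/-- Truncated addition `x ⊕ y = (x + y) ⊓ u` of the pseudo MV-algebra `Γ(G,u)`. -/
def oplus (u x y : G) : G := (x + y) ⊓ u

/-- Left negation `x⁻ = u - x`. -/
def negl (u x : G) : G := u - x

/-- Right negation `x~ = -x + u`. -/
def negr (u x : G) : G := -x + u

/-- `x ⊙ y = (x - u + y) ⊔ 0`. -/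
def odot (u x y : G) : G := (x - u + y) ⊔ 0

/-- `r` is a square root on the pseudo MV-algebra `M = Γ(G,u)`:
it maps `M` to `M` and satisfies (Sq1), (Sq2), (Sq3). -/
def IsSquareRoot (u : G) (r : G → G) : Prop :=
  (∀ x, 0 ≤ x → x ≤ u → 0 ≤ r x ∧ r x ≤ u) ∧
  (∀ x, 0 ≤ x → x ≤ u → odot u (r x) (r x) = x) ∧
  (∀ x y, 0 ≤ x → x ≤ u → 0 ≤ y → y ≤ u → odot u y y ≤ x → y ≤ r x) ∧
  (∀ x, 0 ≤ x → x ≤ u → r (negl u x) = oplus u (negl u (r x)) (r 0)) ∧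
  (∀ x, 0 ≤ x → x ≤ u → r (negr u x) = oplus u (r 0) (negr u (r x)))

/-- `r` is strict: `r 0 = r 0⁻`. -/
def IsStrict (u : G) (r : G → G) : Prop := r 0 = negl u (r 0)

end Core

/-- An additive structure is two-divisible if every element is `h + h` for some `h`. -/
def TwoDivisible (A : Type) [Add A] : Prop := ∀ g : A, ∃ h : A, h + h = g

/-- A bundled abelian lattice-ordered group with a strong unit. -/
structure UnitalAbLGroup : Type 1 where
  carrier : Type
  [grp : AddCommGroup carrier]
  [lat : Lattice carrier]
  cov : ∀ a b c : carrier, b ≤ c → a + b ≤ a + c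
  u : carrier
  u_nonneg : 0 ≤ u
  strong : ∀ g : carrier, ∃ n : ℕ, 1 ≤ n ∧ g ≤ n • u

attribute [instance] UnitalAbLGroup.grp UnitalAbLGroup.lat

/-!
Put `s = r 0`, `f = s + s` and `e = u - f`. The square-root axioms force `e ⊓ f = 0`, make every
`x ∈ [0, e]` complemented in `[0, e]` (`x ⊓ (e - x) = 0`), and halve every `x ∈ [0, f]` as
`(r x - s) + (r x - s)`. As `e + f = u` is a strong unit, `G` is the direct sum of the polars
`f⊥` and `e⊥`, with strong units `e` and `f`. In `f⊥` the interval `[0, e]` is Boolean, so a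
maximal solid subgroup avoiding a given `c ≠ 0` is prime and `a ↦ k` with `a - k • e` in it is
an ℓ-homomorphism to `(ℤ, 1)` not killing `c`. In `e⊥` every positive element is a finite sum
of elements of `[0, f]`, hence has a half.
-/

open LatticeOrderedAddCommGroup

section LatticeOrderedGroup

variable {α : Type*} [Lattice α] [AddCommGroup α] [AddLeftMono α]

theorem eq_zero_of_abs_nonpos {x : α} (h : |x| ≤ 0) : x = 0 :=
  le_antisymm ((le_abs_self x).trans h) (neg_nonpos.mp ((neg_le_abs x).trans h))

theorem le_of_le_of_sub_eq_sub {a b c d : α} (h : a ≤ b) (hsub : b - a = d - c) : c ≤ d :=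
  sub_nonneg.mp (hsub ▸ sub_nonneg.mpr h)

theorem le_of_add_self_le_add_self {a b : α} (h : a + a ≤ b + b) : a ≤ b := by
  refine sub_nonneg.mp (nsmul_two_semiclosed ?_)
  rw [two_nsmul]
  exact sub_nonneg.mpr h |>.trans_eq (by abel)

theorem inf_add_le_inf_add_inf {a b c : α} (ha : 0 ≤ a) (hb : 0 ≤ b) (hc : 0 ≤ c) :
    a ⊓ (b + c) ≤ a ⊓ b + a ⊓ c := by
  rw [inf_add, add_inf, add_inf]
  exact le_inf (le_inf (inf_le_left.trans (le_add_of_nonneg_left ha))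
    (inf_le_left.trans (le_add_of_nonneg_right hc)))
    (le_inf (inf_le_left.trans (le_add_of_nonneg_left hb)) inf_le_right)

theorem add_eq_sup_of_inf_eq_zero {a b : α} (h : a ⊓ b = 0) : a + b = a ⊔ b := by
  rw [← inf_add_sup a b, h, zero_add]

theorem eq_inf_add_inf {c p q : α} (hc : 0 ≤ c) (hp : 0 ≤ p) (hq : 0 ≤ q) (hpq : p ⊓ q = 0)
    (hcpq : c ≤ p + q) : c = c ⊓ p + c ⊓ q := by
  refine le_antisymm ((inf_eq_left.mpr hcpq).symm.trans_le (inf_add_le_inf_add_inf hc hp hq)) ?_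
  have hdisj : c ⊓ p ⊓ (c ⊓ q) = 0 :=
    le_antisymm ((inf_le_inf inf_le_right inf_le_right).trans_eq hpq)
      (le_inf (le_inf hc hp) (le_inf hc hq))
  rw [add_eq_sup_of_inf_eq_zero hdisj]
  exact sup_le inf_le_left inf_le_left

theorem le_nsmul_induction {f : α} (hf : 0 ≤ f) {P : α → Prop}
    (hbase : ∀ x, 0 ≤ x → x ≤ f → P x) (hadd : ∀ a b, P a → P b → P (a + b)) :
    ∀ (n : ℕ) (c : α), 0 ≤ c → c ≤ n • f → P c := by
  intro n
  induction n with
  | zero =>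
    intro c hc hc0
    exact hbase c hc (hc0.trans_eq (zero_nsmul f) |>.trans hf)
  | succ n ih =>
    intro c hc hcn
    have hrest : (c - f)⁺ ≤ n • f :=
      sup_le (sub_le_iff_le_add.mpr (hcn.trans_eq (succ_nsmul f n))) (nsmul_nonneg hf n)
    have hsplit : c = c ⊓ f + (c - f)⁺ := by rw [inf_eq_sub_posPart_sub]; abel
    rw [hsplit]
    exact hadd _ _ (hbase _ (le_inf hc hf) inf_le_right) (ih _ (posPart_nonneg _) hrest)

end LatticeOrderedGroup

section Polar

variable {α : Type*} [Lattice α] [AddCommGroup α] [AddLeftMono α]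

theorem posPart_le_abs (a : α) : a⁺ ≤ |a| := sup_le (le_abs_self a) (abs_nonneg a)

theorem negPart_le_abs (a : α) : a⁻ ≤ |a| := sup_le (neg_le_abs a) (abs_nonneg a)

theorem abs_sup_le_abs_add_abs (a b : α) : |a ⊔ b| ≤ |a| + |b| :=
  sup_le
    (sup_le ((le_abs_self a).trans (le_add_of_nonneg_right (abs_nonneg b)))
      ((le_abs_self b).trans (le_add_of_nonneg_left (abs_nonneg a))))
    ((neg_sup a b).trans_le
      (inf_le_left.trans ((neg_le_abs a).trans (le_add_of_nonneg_right (abs_nonneg b)))))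

namespace LatticeOrderedAddCommGroup

theorem IsSolid.abs_mem {s : Set α} (hs : IsSolid s) {x : α} (hx : x ∈ s) : |x| ∈ s :=
  hs hx (abs_abs x).le

theorem IsSolid.mem_of_nonneg_of_le {s : Set α} (hs : IsSolid s) {x y : α} (hy : y ∈ s)
    (hx : 0 ≤ x) (hxy : x ≤ y) : x ∈ s :=
  hs hy ((abs_of_nonneg hx).trans_le (hxy.trans (le_abs_self y)))

theorem IsSolid.posPart_mem {s : Set α} (hs : IsSolid s) {x : α}
    (hx : x ∈ s) : x⁺ ∈ s :=
  hs.mem_of_nonneg_of_le (hs.abs_mem hx) (posPart_nonneg x) (posPart_le_abs x)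

theorem IsSolid.negPart_mem {s : Set α} (hs : IsSolid s) {x : α}
    (hx : x ∈ s) : x⁻ ∈ s :=
  hs.mem_of_nonneg_of_le (hs.abs_mem hx) (negPart_nonneg x) (negPart_le_abs x)

theorem IsSolid.sup_mem {S : AddSubgroup α} (hS : IsSolid (S : Set α)) ⦃a b : α⦄
    (ha : a ∈ S) (hb : b ∈ S) : a ⊔ b ∈ S :=
  hS (S.add_mem (hS.abs_mem ha) (hS.abs_mem hb))
    ((abs_sup_le_abs_add_abs a b).trans (le_abs_self _))

theorem IsSolid.inf_mem {S : AddSubgroup α} (hS : IsSolid (S : Set α)) ⦃a b : α⦄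
    (ha : a ∈ S) (hb : b ∈ S) : a ⊓ b ∈ S := by
  simpa [neg_sup] using S.neg_mem (hS.sup_mem (S.neg_mem ha) (S.neg_mem hb))

end LatticeOrderedAddCommGroup

def polar (w : α) : AddSubgroup α where
  carrier := {g | |g| ⊓ |w| = 0}
  zero_mem' := by simp
  add_mem' {a b} ha hb := by
    refine le_antisymm ?_ (le_inf (abs_nonneg _) (abs_nonneg w))
    calc |a + b| ⊓ |w| ≤ |w| ⊓ (|a| + |b|) :=
          inf_comm |a + b| |w| ▸ inf_le_inf_left _ (abs_add_le a b)
      _ ≤ |w| ⊓ |a| + |w| ⊓ |b| :=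
          inf_add_le_inf_add_inf (abs_nonneg w) (abs_nonneg a) (abs_nonneg b)
      _ = 0 := by rw [inf_comm, ha, inf_comm, hb, add_zero]
  neg_mem' {a} ha := by simpa using ha

theorem mem_polar {g w : α} : g ∈ polar w ↔ |g| ⊓ |w| = 0 := Iff.rfl

theorem mem_polar_comm {g w : α} : g ∈ polar w ↔ w ∈ polar g := by
  rw [mem_polar, mem_polar, inf_comm]

theorem mem_polar_of_nonneg {g w : α} (hg : 0 ≤ g) (hw : 0 ≤ w) :
    g ∈ polar w ↔ g ⊓ w = 0 := by
  rw [mem_polar, abs_of_nonneg hg, abs_of_nonneg hw]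

theorem isSolid_polar (w : α) : IsSolid (polar w : Set α) := fun _ hx y hyx =>
  le_antisymm ((inf_le_inf_right _ hyx).trans_eq hx) (le_inf (abs_nonneg y) (abs_nonneg w))

theorem nsmul_inf_nsmul_eq_zero {x y : α} (hx : 0 ≤ x) (hy : 0 ≤ y) (h : x ⊓ y = 0)
    (m n : ℕ) : m • x ⊓ n • y = 0 := by
  have hnyx : n • y ∈ polar x :=
    (polar x).nsmul_mem (mem_polar_comm.mp ((mem_polar_of_nonneg hx hy).mpr h)) n
  have hmxny : m • x ∈ polar (n • y) := (polar _).nsmul_mem (mem_polar_comm.mp hnyx) m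
  rwa [mem_polar_of_nonneg (nsmul_nonneg hx m) (nsmul_nonneg hy n)] at hmxny

instance (w : α) : Lattice (polar w) :=
  Subtype.lattice (isSolid_polar w).sup_mem (isSolid_polar w).inf_mem

end Polar

section Splitting

variable {G : Type} [Lattice G] [AddCommGroup G] [AddLeftMono G] {e f : G}

theorem eq_zero_of_mem_polar_of_mem_polar (hunit : IsStrongUnit (e + f)) {z : G}
    (hze : z ∈ polar e) (hzf : z ∈ polar f) : z = 0 := by
  obtain ⟨n, -, hn⟩ := hunit.2 |z|
  have hunit_mem : n • (e + f) ∈ polar z :=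
    (polar z).nsmul_mem ((polar z).add_mem (mem_polar_comm.mp hze) (mem_polar_comm.mp hzf)) n
  have habs : |z| ∈ polar z := (isSolid_polar z).mem_of_nonneg_of_le hunit_mem (abs_nonneg z) hn
  rw [mem_polar, abs_abs, inf_idem] at habs
  exact eq_zero_of_abs_nonpos habs.le

theorem nonneg_of_mem_polar_of_add_nonneg (hunit : IsStrongUnit (e + f)) {a b : G}
    (ha : a ∈ polar f) (hb : b ∈ polar e) (hab : 0 ≤ a + b) : 0 ≤ a := by
  have hneg_le : a⁻ ≤ b⁺ := sup_le_sup_right (neg_le_iff_add_nonneg'.mpr hab) 0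
  have hf : a⁻ ∈ polar f := (isSolid_polar f).negPart_mem ha
  have he : a⁻ ∈ polar e := (isSolid_polar e).mem_of_nonneg_of_le
    ((isSolid_polar e).abs_mem hb) (negPart_nonneg a) (hneg_le.trans (posPart_le_abs b))
  exact negPart_eq_zero.mp (eq_zero_of_mem_polar_of_mem_polar hunit he hf)

variable (e f) in
def polarAdd : polar f × polar e →+ G := (polar f).subtype.coprod (polar e).subtype

theorem polarAdd_le_polarAdd_iff (hunit : IsStrongUnit (e + f)) {x y : polar f × polar e} :
    polarAdd e f x ≤ polarAdd e f y ↔ x ≤ y := by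
  obtain ⟨⟨a, ha⟩, ⟨b, hb⟩⟩ := x
  obtain ⟨⟨a', ha'⟩, ⟨b', hb'⟩⟩ := y
  simp only [polarAdd, AddMonoidHom.coprod_apply, AddSubgroup.coe_subtype, Prod.mk_le_mk,
    Subtype.mk_le_mk]
  refine ⟨fun h => ?_, fun h => add_le_add h.1 h.2⟩
  have hsum : 0 ≤ (a' - a) + (b' - b) := sub_nonneg.mpr h |>.trans_eq (by abel)
  exact ⟨sub_nonneg.mp (nonneg_of_mem_polar_of_add_nonneg hunit
      ((polar f).sub_mem ha' ha) ((polar e).sub_mem hb' hb) hsum),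
    sub_nonneg.mp (nonneg_of_mem_polar_of_add_nonneg (add_comm e f ▸ hunit)
      ((polar e).sub_mem hb' hb) ((polar f).sub_mem ha' ha) (hsum.trans_eq (add_comm _ _)))⟩

variable (he : 0 ≤ e) (hf : 0 ≤ f) (hef : e ⊓ f = 0)
include he hf hef

theorem inf_nsmul_mem_polar {c : G} (hc : 0 ≤ c) (n : ℕ) : c ⊓ n • e ∈ polar f :=
  (isSolid_polar f).mem_of_nonneg_of_le
    ((polar f).nsmul_mem ((mem_polar_of_nonneg he hf).mpr hef) n)
    (le_inf hc (nsmul_nonneg he n)) inf_le_right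

theorem eq_inf_nsmul_add_inf_nsmul {c : G} {n : ℕ} (hc : 0 ≤ c) (hcn : c ≤ n • (e + f)) :
    c = c ⊓ n • e + c ⊓ n • f :=
  eq_inf_add_inf hc (nsmul_nonneg he n) (nsmul_nonneg hf n)
    (nsmul_inf_nsmul_eq_zero he hf hef n n) (hcn.trans_eq (nsmul_add e f n))

theorem le_nsmul_of_mem_polar (hunit : IsStrongUnit (e + f)) {g : G} (hg : g ∈ polar f) {n : ℕ}
    (hgn : g ≤ n • (e + f)) : g ≤ n • e := by
  have hpos : g⁺ ∈ polar f := (isSolid_polar f).posPart_mem hg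
  have hsplit := eq_inf_nsmul_add_inf_nsmul he hf hef (posPart_nonneg g)
    (sup_le hgn (nsmul_nonneg hunit.1 n))
  have hzero : g⁺ ⊓ n • f = 0 := eq_zero_of_mem_polar_of_mem_polar hunit
    (inf_nsmul_mem_polar hf he (inf_comm e f ▸ hef) (posPart_nonneg g) n)
    ((isSolid_polar f).mem_of_nonneg_of_le hpos (le_inf (posPart_nonneg g) (nsmul_nonneg hf n))
      inf_le_left)
  rw [hzero, add_zero] at hsplit
  calc g ≤ g⁺ := le_posPart g
    _ = g⁺ ⊓ n • e := hsplit
    _ ≤ n • e := inf_le_right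

theorem polarAdd_surjective (hunit : IsStrongUnit (e + f)) :
    Function.Surjective (polarAdd e f) := by
  have hnonneg : ∀ c : G, 0 ≤ c → c ∈ (polarAdd e f).range := fun c hc => by
    obtain ⟨n, -, hn⟩ := hunit.2 c
    exact ⟨(⟨_, inf_nsmul_mem_polar he hf hef hc n⟩,
      ⟨_, inf_nsmul_mem_polar hf he (inf_comm e f ▸ hef) hc n⟩),
      (eq_inf_nsmul_add_inf_nsmul he hf hef hc hn).symm⟩
  intro g
  rw [← posPart_sub_negPart g]
  exact (polarAdd e f).range.sub_mem (hnonneg _ (posPart_nonneg g))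
    (hnonneg _ (negPart_nonneg g))

noncomputable def polarAddOrderIso (hunit : IsStrongUnit (e + f)) : polar f × polar e ≃+o G :=
  OrderAddMonoidIso.mk'
    (Equiv.ofBijective _ ⟨fun _ _ h => le_antisymm
        ((polarAdd_le_polarAdd_iff hunit).mp h.le) ((polarAdd_le_polarAdd_iff hunit).mp h.ge),
      polarAdd_surjective he hf hef hunit⟩)
    (polarAdd_le_polarAdd_iff hunit) (map_add (polarAdd e f))

/-- The polar `f⊥`, with strong unit `e`. -/
def UnitalAbLGroup.ofPolar (hunit : IsStrongUnit (e + f)) : UnitalAbLGroup where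
  carrier := polar f
  cov a _ _ h := add_le_add_right (α := G) h a
  u := ⟨e, (mem_polar_of_nonneg he hf).mpr hef⟩
  u_nonneg := he
  strong g := by
    obtain ⟨n, hn1, hn⟩ := hunit.2 g
    refine ⟨n, hn1, ?_⟩
    show (g : G) ≤ ((n • ⟨e, _⟩ : polar f) : G)
    rw [AddSubgroup.coe_nsmul]
    exact le_nsmul_of_mem_polar he hf hef hunit g.2 hn

theorem twoDivisible_polar (hunit : IsStrongUnit (e + f))
    (hhalf : ∀ x, 0 ≤ x → x ≤ f → ∃ h, 0 ≤ h ∧ h + h = x) :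
    TwoDivisible (polar e) := by
  have hnonneg : ∀ c ∈ polar e, 0 ≤ c → ∃ h ∈ polar e, h + h = c := by
    intro c hc hc0
    obtain ⟨n, -, hn⟩ := hunit.2 c
    have hcn : c ≤ n • f := le_nsmul_of_mem_polar hf he (inf_comm e f ▸ hef)
      (add_comm e f ▸ hunit) hc (hn.trans_eq (by rw [add_comm]))
    obtain ⟨h, h0, hh⟩ :=
      le_nsmul_induction hf (P := fun c => ∃ h, 0 ≤ h ∧ h + h = c) hhalf
        (fun _ _ ⟨x, hx0, hx⟩ ⟨y, hy0, hy⟩ =>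
          ⟨x + y, add_nonneg hx0 hy0, by rw [← hx, ← hy]; abel⟩) n c hc0 hcn
    exact ⟨h, (isSolid_polar e).mem_of_nonneg_of_le hc h0 (hh ▸ le_add_of_nonneg_left h0), hh⟩
  rintro ⟨g, hg⟩
  obtain ⟨h₁, hm₁, hh₁⟩ := hnonneg _ ((isSolid_polar e).posPart_mem hg) (posPart_nonneg g)
  obtain ⟨h₂, hm₂, hh₂⟩ := hnonneg _ ((isSolid_polar e).negPart_mem hg) (negPart_nonneg g)
  refine ⟨⟨h₁ - h₂, (polar e).sub_mem hm₁ hm₂⟩, Subtype.ext ?_⟩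
  show (h₁ - h₂) + (h₁ - h₂) = g
  rw [← posPart_sub_negPart g, ← hh₁, ← hh₂]
  abel

end Splitting

section Subdirect

variable {H : Type*} [Lattice H] [AddCommGroup H] [AddLeftMono H]

/-- For solid `M`, the solid subgroup generated by `M` and `w`. -/
def AddSubgroup.solidJoin (M : AddSubgroup H) (w : H) : AddSubgroup H where
  carrier := {z | ∃ m ∈ M, 0 ≤ m ∧ ∃ n : ℕ, |z| ≤ m + n • |w|}
  zero_mem' := ⟨0, M.zero_mem, le_rfl, 0, by simp⟩
  add_mem' := by
    rintro z z' ⟨m, hm, hm0, n, hn⟩ ⟨m', hm', hm0', n', hn'⟩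
    refine ⟨m + m', M.add_mem hm hm', add_nonneg hm0 hm0', n + n', ?_⟩
    calc |z + z'| ≤ |z| + |z'| := abs_add_le z z'
      _ ≤ (m + n • |w|) + (m' + n' • |w|) := add_le_add hn hn'
      _ = m + m' + (n + n') • |w| := by rw [add_nsmul]; abel
  neg_mem' := by
    rintro z ⟨m, hm, hm0, n, hn⟩
    exact ⟨m, hm, hm0, n, (abs_neg z).trans_le hn⟩

theorem AddSubgroup.isSolid_solidJoin (M : AddSubgroup H) (w : H) :
    IsSolid (M.solidJoin w : Set H) := by
  rintro z ⟨m, hm, hm0, n, hn⟩ y hyz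
  exact ⟨m, hm, hm0, n, hyz.trans hn⟩

theorem AddSubgroup.le_solidJoin {M : AddSubgroup H} (hM : IsSolid (M : Set H)) (w : H) :
    M ≤ M.solidJoin w := fun z hz =>
  ⟨|z|, hM.abs_mem hz, abs_nonneg z, 0, by simp⟩

theorem AddSubgroup.mem_solidJoin_self (M : AddSubgroup H) (w : H) : w ∈ M.solidJoin w :=
  ⟨0, M.zero_mem, le_rfl, 1, by simp⟩

theorem isSolid_bot : IsSolid ((⊥ : AddSubgroup H) : Set H) := by
  rintro x hx y hyx
  rw [SetLike.mem_coe, AddSubgroup.mem_bot] at hx ⊢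
  exact eq_zero_of_abs_nonpos (hyx.trans_eq (by rw [hx, abs_zero]))

theorem exists_maximal_isSolid_not_mem {c : H} (hc : c ≠ 0) :
    ∃ M : AddSubgroup H,
      Maximal (fun S : AddSubgroup H => IsSolid (S : Set H) ∧ c ∉ S) M := by
  refine (zorn_le_nonempty₀ {S : AddSubgroup H | IsSolid (S : Set H) ∧ c ∉ S}
    (fun C hCS hC S hS => ?_) ⊥ ⟨isSolid_bot, by simpa using hc⟩).imp fun _ h => h.2
  have hmem : ∀ {x}, x ∈ sSup C ↔ ∃ T ∈ C, x ∈ T :=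
    AddSubgroup.mem_sSup_of_directedOn ⟨S, hS⟩ hC.directedOn
  refine ⟨sSup C, ⟨fun x hx y hyx => ?_, fun hcC => ?_⟩, fun T hT => le_sSup hT⟩
  · obtain ⟨T, hT, hxT⟩ := hmem.mp hx
    exact hmem.mpr ⟨T, hT, (hCS hT).1 hxT hyx⟩
  · obtain ⟨T, hT, hcT⟩ := hmem.mp hcC
    exact (hCS hT).2 hcT

theorem mem_or_mem_of_maximal {M : AddSubgroup H} {c : H}
    (hM : Maximal (fun S : AddSubgroup H => IsSolid (S : Set H) ∧ c ∉ S) M) {x y : H}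
    (hx : 0 ≤ x) (hy : 0 ≤ y) (hxy : x ⊓ y = 0) : x ∈ M ∨ y ∈ M := by
  have hjoin : ∀ w, 0 ≤ w → w ∉ M → ∃ m ∈ M, 0 ≤ m ∧ ∃ n : ℕ, |c| ≤ m + n • w := by
    intro w hw hwM
    by_contra hcw
    rw [← abs_of_nonneg hw] at hcw
    exact hwM (hM.2 ⟨M.isSolid_solidJoin w, hcw⟩ (M.le_solidJoin hM.1.1 w)
      (M.mem_solidJoin_self w))
  by_contra! hxyM
  obtain ⟨m, hm, hm0, n, hn⟩ := hjoin x hx hxyM.1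
  obtain ⟨m', hm', hm0', n', hn'⟩ := hjoin y hy hxyM.2
  have hc : |c| ≤ m + m' :=
    calc |c| ≤ (m + m' + n • x) ⊓ (m + m' + n' • y) :=
          le_inf (hn.trans (add_le_add_left (le_add_of_nonneg_right hm0') _))
            (hn'.trans (add_le_add_left (le_add_of_nonneg_left hm0) _))
      _ = m + m' := by rw [← add_inf, nsmul_inf_nsmul_eq_zero hx hy hxy, add_zero]
  exact hM.1.2 (hM.1.1 (M.add_mem hm hm') (hc.trans (le_abs_self _)))

end Subdirect

section IntegerPart

variable {H : Type} [Lattice H] [AddCommGroup H] [AddLeftMono H] {M : AddSubgroup H} {e : H}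

theorem eq_zero_of_zsmul_mem (hM : IsSolid (M : Set H)) (he : 0 ≤ e) (heM : e ∉ M) {k : ℤ}
    (hk : k • e ∈ M) : k = 0 := by
  obtain ⟨n, hkn⟩ := Int.eq_nat_or_neg k
  have hn : n • e ∈ M := by rcases hkn with rfl | rfl <;> simpa using hk
  have : n = 0 := by
    by_contra h0
    exact heM (hM.mem_of_nonneg_of_le hn he (le_self_nsmul he h0))
  omega

variable (hprime : ∀ x y : H, 0 ≤ x → 0 ≤ y → x ⊓ y = 0 → x ∈ M ∨ y ∈ M)
  (hbool : ∀ x, 0 ≤ x → x ≤ e → x ⊓ (e - x) = 0)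
include hprime hbool

theorem exists_nat_sub_nsmul_mem (he : 0 ≤ e) {a : H} (ha : 0 ≤ a) {n : ℕ}
    (han : a ≤ n • e) : ∃ k : ℕ, a - k • e ∈ M :=
  le_nsmul_induction he (P := fun a => ∃ k : ℕ, a - k • e ∈ M)
    (fun x hx hxe => (hprime x (e - x) hx (sub_nonneg.mpr hxe) (hbool x hx hxe)).elim
      (fun h => ⟨0, by simpa using h⟩) (fun h => ⟨1, by simpa using M.neg_mem h⟩))
    (fun a b ⟨k, hk⟩ ⟨l, hl⟩ => ⟨k + l, by
      convert M.add_mem hk hl using 1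
      rw [add_nsmul]
      abel⟩)
    n a ha han

theorem exists_int_sub_zsmul_mem (hu : IsStrongUnit e) (a : H) :
    ∃ k : ℤ, a - k • e ∈ M := by
  obtain ⟨n₁, -, hn₁⟩ := hu.2 a⁺
  obtain ⟨n₂, -, hn₂⟩ := hu.2 a⁻
  obtain ⟨k₁, hk₁⟩ := exists_nat_sub_nsmul_mem hprime hbool hu.1 (posPart_nonneg a) hn₁
  obtain ⟨k₂, hk₂⟩ := exists_nat_sub_nsmul_mem hprime hbool hu.1 (negPart_nonneg a) hn₂
  refine ⟨k₁ - k₂, ?_⟩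
  convert M.sub_mem hk₁ hk₂ using 1
  rw [sub_zsmul, natCast_zsmul, natCast_zsmul]
  nth_rw 1 [← posPart_sub_negPart a]
  abel

theorem exists_addMonoidHom_int (hM : IsSolid (M : Set H)) (hu : IsStrongUnit e) (heM : e ∉ M) :
    ∃ p : H →+ ℤ, ∀ a k, p a = k ↔ a - k • e ∈ M := by
  have huniq : ∀ {a : H} {k l : ℤ}, a - k • e ∈ M → a - l • e ∈ M → k = l :=
      fun {a k l} hk hl => by
    have := eq_zero_of_zsmul_mem hM hu.1 heM (k := l - k) <| by
      convert M.sub_mem hk hl using 1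
      rw [sub_zsmul]
      abel
    omega
  choose p hp using exists_int_sub_zsmul_mem hprime hbool hu
  refine ⟨AddMonoidHom.mk' p fun a b => huniq (hp (a + b)) ?_,
    fun a k => ⟨fun h => h ▸ hp a, huniq (hp a)⟩⟩
  convert M.add_mem (hp a) (hp b) using 1
  rw [add_zsmul]
  abel

end IntegerPart

section Representation

variable {H : Type} [Lattice H] [AddCommGroup H] [AddLeftMono H] {e : H}

theorem AddMonoidHom.map_inf_of_posPart_or_negPart (p : H →+ ℤ) (hmono : Monotone p)
    (hp : ∀ a, p a⁺ = 0 ∨ p a⁻ = 0) (a b : H) : p (a ⊓ b) = p a ⊓ p b := by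
  refine le_antisymm (le_inf (hmono inf_le_left) (hmono inf_le_right)) ?_
  rcases hp (a - b) with h | h
  · rw [inf_eq_sub_posPart_sub a b, map_sub, h, sub_zero]
    exact inf_le_left
  · rw [inf_comm a b, inf_eq_sub_posPart_sub b a, ← neg_sub a b, posPart_neg, map_sub, h,
      sub_zero]
    exact inf_le_right

theorem AddMonoidHom.map_sup_of_map_inf (p : H →+ ℤ) (hp : ∀ a b, p (a ⊓ b) = p a ⊓ p b)
    (a b : H) : p (a ⊔ b) = p a ⊔ p b := by
  have h := congrArg p (inf_add_sup a b)
  rw [map_add, map_add, hp] at h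
  have := min_add_max (p a) (p b)
  omega

theorem exists_addMonoidHom_int_map_inf (hu : IsStrongUnit e)
    (hbool : ∀ x, 0 ≤ x → x ≤ e → x ⊓ (e - x) = 0) {c : H} (hc : c ≠ 0) :
    ∃ p : H →+ ℤ, (∀ a b, p (a ⊓ b) = p a ⊓ p b) ∧ p e = 1 ∧ p c ≠ 0 := by
  obtain ⟨M, hM⟩ := exists_maximal_isSolid_not_mem hc
  have hprime : ∀ x y : H, 0 ≤ x → 0 ≤ y → x ⊓ y = 0 → x ∈ M ∨ y ∈ M :=
    fun _ _ => mem_or_mem_of_maximal hM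
  have heM : e ∉ M := fun heM => by
    obtain ⟨n, -, hn⟩ := hu.2 |c|
    exact hM.1.2 (hM.1.1 (M.nsmul_mem heM n) (hn.trans (le_abs_self _)))
  obtain ⟨p, hp⟩ := exists_addMonoidHom_int hprime hbool hM.1.1 hu heM
  have hker : ∀ {a}, p a = 0 ↔ a ∈ M := fun {a} => by simpa using hp a 0
  have hmono : Monotone p := fun a b hab => by
    obtain ⟨n, -, hn⟩ := hu.2 (b - a)
    obtain ⟨k, hk⟩ := exists_nat_sub_nsmul_mem hprime hbool hu.1 (sub_nonneg.mpr hab) hn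
    have := (hp (b - a) k).mpr (by simpa using hk)
    rw [map_sub] at this
    omega
  refine ⟨p, p.map_inf_of_posPart_or_negPart hmono fun a => ?_, (hp e 1).mpr (by simp),
    fun h => hM.1.2 (hker.mp h)⟩
  exact (hprime _ _ (posPart_nonneg a) (negPart_nonneg a) (posPart_inf_negPart_eq_zero a)).imp
    hker.mpr hker.mpr

theorem exists_subdirect_int (hu : IsStrongUnit e)
    (hbool : ∀ x, 0 ≤ x → x ≤ e → x ⊓ (e - x) = 0) :
    ∃ (X : Type) (φ : H → X → ℤ),
      Function.Injective φ ∧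
      (∀ a b : H, φ (a + b) = φ a + φ b) ∧
      (∀ a b : H, φ (a ⊓ b) = φ a ⊓ φ b) ∧
      (∀ a b : H, φ (a ⊔ b) = φ a ⊔ φ b) ∧
      φ e = (fun _ => (1 : ℤ)) ∧
      (∀ p : X, Function.Surjective (fun a : H => φ a p)) := by
  refine ⟨{p : H →+ ℤ // (∀ a b, p (a ⊓ b) = p a ⊓ p b) ∧ p e = 1}, fun a p => p.1 a,
    fun a b hab => ?_, fun a b => funext fun p => map_add p.1 a b,
    fun a b => funext fun p => p.2.1 a b,
    fun a b => funext fun p => p.1.map_sup_of_map_inf p.2.1 a b,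
    funext fun p => p.2.2, fun p k => ⟨k • e, by simp [p.2.2]⟩⟩
  by_contra hne
  obtain ⟨p, hpinf, hpe, hp⟩ := exists_addMonoidHom_int_map_inf hu hbool (sub_ne_zero.mpr hne)
  exact hp (by rw [map_sub, sub_eq_zero]; exact congrFun hab ⟨p, hpinf, hpe⟩)

end Representation

namespace IsSquareRoot

variable {G : Type} [Lattice G] [AddCommGroup G] [AddLeftMono G] {u : G} {r : G → G}

variable (hr : IsSquareRoot u r) (hu : 0 ≤ u)
include hr

theorem add_self_le {x : G} (hx : 0 ≤ x) (hxu : x ≤ u) : r x + r x ≤ u + x :=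
  le_of_le_of_sub_eq_sub (le_sup_left.trans_eq (hr.2.1 x hx hxu)) (by abel)

theorem le_apply_of_add_self_le {x y : G} (hx : 0 ≤ x) (hxu : x ≤ u) (hy : 0 ≤ y)
    (hyu : y ≤ u) (h : y + y ≤ u + x) : y ≤ r x :=
  hr.2.2.1 x y hx hxu hy hyu (sup_le (le_of_le_of_sub_eq_sub h (by abel)) hx)

theorem le_apply {x : G} (hx : 0 ≤ x) (hxu : x ≤ u) : x ≤ r x :=
  hr.le_apply_of_add_self_le hx hxu hx hxu (add_le_add_left hxu x)

include hu

omit [AddLeftMono G] in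
theorem apply_zero_nonneg : 0 ≤ r 0 := (hr.1 0 le_rfl hu).1

theorem apply_zero_add_self_le : r 0 + r 0 ≤ u := by
  simpa using hr.add_self_le le_rfl hu

theorem sub_apply_zero_add_self_nonneg : 0 ≤ u - (r 0 + r 0) :=
  sub_nonneg.mpr (hr.apply_zero_add_self_le hu)

theorem apply_zero_le {x : G} (hx : 0 ≤ x) (hxu : x ≤ u) : r 0 ≤ r x :=
  hr.le_apply_of_add_self_le hx hxu (hr.apply_zero_nonneg hu) (hr.1 0 le_rfl hu).2
    ((hr.apply_zero_add_self_le hu).trans (le_add_of_nonneg_right hx))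

theorem apply_le_apply_zero_add {x : G} (hx : 0 ≤ x) (hxu : x ≤ u) : r x ≤ r 0 + x := by
  have hy : r x - x ≤ r 0 := by
    refine hr.le_apply_of_add_self_le le_rfl hu (sub_nonneg.mpr (hr.le_apply hx hxu))
      ((sub_le_self _ hx).trans (hr.1 x hx hxu).2) ?_
    calc r x - x + (r x - x) = (r x + r x) - (x + x) := by abel
      _ ≤ (u + x) - (x + x) := sub_le_sub_right (hr.add_self_le hx hxu) _
      _ = u - x := by abel
      _ ≤ u + 0 := (sub_le_self u hx).trans_eq (add_zero u).symm
  exact sub_le_iff_le_add.mp hy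

theorem add_le_apply_add_self {x : G} (hx : 0 ≤ x) (hxu : x ≤ u) :
    x + (r 0 + r 0) ≤ r x + r x := by
  have hcompl : r (u - x) = u - r x + r 0 := by
    have h := hr.2.2.2.1 x hx hxu
    rw [negl, negl, oplus, inf_eq_left.mpr] at h
    · exact h
    · exact le_of_le_of_sub_eq_sub (hr.apply_zero_le hu hx hxu) (by abel)
  have h := hr.add_self_le (sub_nonneg.mpr hxu) (sub_le_self u hx)
  rw [hcompl] at h
  exact le_of_le_of_sub_eq_sub h (by abel)

theorem apply_sub_apply_zero_add_self : r (u - (r 0 + r 0)) = u - r 0 := by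
  have he := hr.sub_apply_zero_add_self_nonneg hu
  have heu : u - (r 0 + r 0) ≤ u :=
    sub_le_self u (add_nonneg (hr.apply_zero_nonneg hu) (hr.apply_zero_nonneg hu))
  refine le_antisymm ?_ ?_
  · exact le_of_add_self_le_add_self (le_of_le_of_sub_eq_sub (hr.add_self_le he heu) (by abel))
  · exact hr.le_apply_of_add_self_le he heu (sub_nonneg.mpr (hr.1 0 le_rfl hu).2)
      (sub_le_self u (hr.apply_zero_nonneg hu)) (le_of_eq (by abel))

theorem apply_apply_zero_add_self : r (r 0 + r 0) = r 0 + r 0 := by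
  have h := hr.2.2.2.1 _ (hr.sub_apply_zero_add_self_nonneg hu)
    (sub_le_self u (add_nonneg (hr.apply_zero_nonneg hu) (hr.apply_zero_nonneg hu)))
  rwa [hr.apply_sub_apply_zero_add_self hu, negl, negl, oplus, sub_sub_cancel, sub_sub_cancel,
    inf_eq_left.mpr (hr.apply_zero_add_self_le hu)] at h

theorem sub_inf_eq_zero : (u - (r 0 + r 0)) ⊓ (r 0 + r 0) = 0 := by
  have h := hr.2.1 _ (add_nonneg (hr.apply_zero_nonneg hu) (hr.apply_zero_nonneg hu))
    (hr.apply_zero_add_self_le hu)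
  rw [hr.apply_apply_zero_add_self hu, odot] at h
  have hneg : -((u - (r 0 + r 0)) ⊓ (r 0 + r 0)) =
      (r 0 + r 0 - u + (r 0 + r 0)) ⊔ 0 - (r 0 + r 0) := by
    rw [neg_inf, sup_sub]
    congr 1 <;> abel
  rwa [h, sub_self, neg_eq_zero] at hneg

theorem inf_sub_eq_zero {x : G} (hx : 0 ≤ x) (hxe : x ≤ u - (r 0 + r 0)) :
    x ⊓ (u - (r 0 + r 0) - x) = 0 := by
  set d := x ⊓ (u - (r 0 + r 0) - x)
  have hd : 0 ≤ d := le_inf hx (sub_nonneg.mpr hxe)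
  have hdd : d + d ≤ u - (r 0 + r 0) := (add_le_add inf_le_left inf_le_right).trans_eq (by abel)
  have hs := hr.apply_zero_nonneg hu
  have hy : r 0 + d ≤ r 0 := by
    refine hr.le_apply_of_add_self_le le_rfl hu (add_nonneg hs hd) ?_ ?_
    · exact le_of_le_of_sub_eq_sub (add_le_add (inf_le_left.trans hxe) hs) (by abel)
    · exact le_of_le_of_sub_eq_sub hdd (by abel)
  exact le_antisymm (le_of_le_of_sub_eq_sub hy (by abel)) hd

theorem exists_half {x : G} (hx : 0 ≤ x) (hxf : x ≤ r 0 + r 0) :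
    ∃ h, 0 ≤ h ∧ h + h = x := by
  have hxu := hxf.trans (hr.apply_zero_add_self_le hu)
  have hle := hr.apply_le_apply_zero_add hu hx hxu
  obtain ⟨q, hq_def⟩ : ∃ q, q = r x + r x - (r 0 + r 0) - x := ⟨_, rfl⟩
  have hq0 : 0 ≤ q :=
    le_of_le_of_sub_eq_sub (hr.add_le_apply_add_self hu hx hxu) (by rw [hq_def]; abel)
  have hqx : q ≤ x := le_of_le_of_sub_eq_sub (add_le_add hle hle) (by rw [hq_def]; abel)
  have hqe : q ≤ u - (r 0 + r 0) :=
    le_of_le_of_sub_eq_sub (hr.add_self_le hx hxu) (by rw [hq_def]; abel)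
  have hq : q = 0 := le_antisymm ((le_inf hqx hqe).trans
    ((inf_le_inf_right _ hxf).trans_eq ((inf_comm _ _).trans (hr.sub_inf_eq_zero hu)))) hq0
  refine ⟨r x - r 0, sub_nonneg.mpr (hr.apply_zero_le hu hx hxu), ?_⟩
  calc r x - r 0 + (r x - r 0) = x + q := by rw [hq_def]; abel
    _ = x := by rw [hq, add_zero]

end IsSquareRoot

instance UnitalAbLGroup.addLeftMono (A : UnitalAbLGroup) : AddLeftMono A.carrier :=
  ⟨fun a _ _ h => A.cov a _ _ h⟩

theorem UnitalAbLGroup.isStrongUnit (A : UnitalAbLGroup) : IsStrongUnit A.u :=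
  ⟨A.u_nonneg, A.strong⟩

/-- an MV-algebra `M = Γ(G,u)` with a square root splits `(G,u)` as a
direct product `(G₁ × G₂,(u₁,u₂))` where `(G₁,u₁)` is a subdirect product of copies
of `(ℤ,1)` and `G₂` is two-divisible. -/
theorem stmt_7 {G : Type} [Lattice G] [AddCommGroup G]
    [CovariantClass G G (· + ·) (· ≤ ·)]
    (u : G) (hu : IsStrongUnit u) (r : G → G) (hr : IsSquareRoot u r) :
    ∃ (A B : UnitalAbLGroup) (ψ : G → A.carrier × B.carrier),
      Function.Bijective ψ ∧
      (∀ a b : G, ψ (a + b) = ψ a + ψ b) ∧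
      (∀ a b : G, ψ (a ⊓ b) = ψ a ⊓ ψ b) ∧
      (∀ a b : G, ψ (a ⊔ b) = ψ a ⊔ ψ b) ∧
      ψ u = (A.u, B.u) ∧
      (∃ (X : Type) (φ : A.carrier → X → ℤ),
        Function.Injective φ ∧
        (∀ a b : A.carrier, φ (a + b) = φ a + φ b) ∧
        (∀ a b : A.carrier, φ (a ⊓ b) = φ a ⊓ φ b) ∧
        (∀ a b : A.carrier, φ (a ⊔ b) = φ a ⊔ φ b) ∧
        φ A.u = (fun _ => (1 : ℤ)) ∧
        (∀ p : X, Function.Surjective (fun a : A.carrier => φ a p))) ∧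
      TwoDivisible B.carrier := by
  set f := r 0 + r 0
  set e := u - f
  have he : 0 ≤ e := hr.sub_apply_zero_add_self_nonneg hu.1
  have hf : 0 ≤ f := add_nonneg (hr.apply_zero_nonneg hu.1) (hr.apply_zero_nonneg hu.1)
  have hef : e ⊓ f = 0 := hr.sub_inf_eq_zero hu.1
  have hunit : IsStrongUnit (e + f) := by rwa [sub_add_cancel]
  let Φ := polarAddOrderIso he hf hef hunit
  refine ⟨.ofPolar he hf hef hunit, .ofPolar hf he (inf_comm e f ▸ hef) (add_comm e f ▸ hunit),
    Φ.symm, Φ.symm.bijective, map_add Φ.symm, Φ.symm.toOrderIso.map_inf,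
    Φ.symm.toOrderIso.map_sup, Φ.symm_apply_eq.mpr (sub_add_cancel u f).symm, ?_,
    twoDivisible_polar he hf hef hunit fun _ hx hxf => hr.exists_half hu.1 hx hxf⟩
  exact exists_subdirect_int (UnitalAbLGroup.isStrongUnit _)
    fun x hx hxe => Subtype.ext (hr.inf_sub_eq_zero hu.1 hx hxe)
end

section
/- Let M = Γ(G,u) be a representable pseudo MV-algebra. The following are equivalent: (i) G is two-divisible and there exists h ∈ C(G) with h + h = u; (ii) M is dense in G (for each g ∈ G with g ≥ 0 there exist x ∈ M and n ∈ ℕ with g = n·x) and M has a strict square root. -/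
/-- A bundled linearly ordered (not necessarily abelian) group with a strong unit;
`Γ((K i).carrier, (K i).u)` is then a linearly ordered pseudo MV-algebra. -/
structure LinUnitalGroup : Type 1 where
  carrier : Type
  [grp : AddGroup carrier]
  [lin : LinearOrder carrier]
  covl : ∀ a b c : carrier, b ≤ c → a + b ≤ a + c
  covr : ∀ a b c : carrier, b ≤ c → b + a ≤ c + a
  u : carrier
  u_nonneg : 0 ≤ u
  strong : ∀ g : carrier, ∃ n : ℕ, 1 ≤ n ∧ g ≤ n • u

attribute [instance] LinUnitalGroup.grp LinUnitalGroup.lin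

/-- The pseudo MV-algebra `M = Γ(G,u)` is representable: there is a family of linearly
ordered pseudo MV-algebras `Γ((K i).carrier,(K i).u)` and an injective homomorphism
(preserving `⊕`, `⁻`, `~`, `0`, `1`) of `M` into their direct product which is
surjective in each coordinate. -/
def IsRepresentable {G : Type} [Lattice G] [AddGroup G] (u : G) : Prop :=
  ∃ (ι : Type) (K : ι → LinUnitalGroup) (f : G → ∀ i, (K i).carrier),
    (∀ x, 0 ≤ x → x ≤ u → ∀ i, 0 ≤ f x i ∧ f x i ≤ (K i).u) ∧
    (∀ i, f 0 i = 0) ∧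
    (∀ i, f u i = (K i).u) ∧
    (∀ x y, 0 ≤ x → x ≤ u → 0 ≤ y → y ≤ u → ∀ i,
      f (oplus u x y) i = min (f x i + f y i) (K i).u) ∧
    (∀ x, 0 ≤ x → x ≤ u → ∀ i, f (negl u x) i = (K i).u - f x i) ∧
    (∀ x, 0 ≤ x → x ≤ u → ∀ i, f (negr u x) i = -(f x i) + (K i).u) ∧
    (∀ x y, 0 ≤ x → x ≤ u → 0 ≤ y → y ≤ u → (∀ i, f x i = f y i) → x = y) ∧
    (∀ i, ∀ z : (K i).carrier, 0 ≤ z → z ≤ (K i).u →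
      ∃ x, 0 ≤ x ∧ x ≤ u ∧ f x i = z)

instance (L : LinUnitalGroup) : AddLeftMono L.carrier := ⟨fun a _ _ h => L.covl a _ _ h⟩

instance (L : LinUnitalGroup) : AddRightMono L.carrier := ⟨fun a _ _ h => L.covr a _ _ h⟩

theorem TwoDivisible.exists_two_pow_nsmul_eq {G : Type} [AddMonoid G] (htd : TwoDivisible G)
    (g : G) : ∀ k : ℕ, ∃ x : G, 2 ^ k • x = g
  | 0 => ⟨g, by simp⟩
  | k + 1 => by
    obtain ⟨y, hy⟩ := TwoDivisible.exists_two_pow_nsmul_eq htd g k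
    obtain ⟨x, rfl⟩ := htd y
    exact ⟨x, by rw [pow_succ, mul_nsmul', two_nsmul, hy]⟩

section AddGroup

variable {G : Type} [AddGroup G]

theorem sub_add_self_of_addCommute {u x : G} (hx : AddCommute u x) : x - u + x = x + x - u := by
  rw [sub_eq_add_neg, add_assoc, hx.neg_left.eq, ← add_assoc, ← sub_eq_add_neg]

theorem sub_add_self_eq_zero_of_add_self_eq {h u : G} (hhu : h + h = u) : h - u + h = 0 := by
  simp only [← hhu, sub_eq_add_neg, neg_add_rev, add_neg_cancel_left, neg_add_cancel]

theorem IsStrict.add_self {u : G} {r : G → G} (hs : IsStrict u r) : r 0 + r 0 = u :=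
  eq_sub_iff_add_eq.1 hs

end AddGroup

section LatticeGroup

variable {G : Type} [Lattice G] [AddGroup G]

theorem oplus_negl_eq_iff_le [AddLeftMono G] {u x y : G} :
    oplus u (negl u x) y = u ↔ x ≤ y := by
  rw [oplus, negl, inf_eq_right, sub_eq_add_neg, add_assoc, le_add_iff_nonneg_right,
    le_neg_add_iff_add_le, add_zero]

theorem oplus_nonneg [AddLeftMono G] {u x y : G} (hu : 0 ≤ u) (hx : 0 ≤ x) (hy : 0 ≤ y) :
    0 ≤ oplus u x y :=
  le_inf (add_nonneg hx hy) hu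

theorem oplus_le (u x y : G) : oplus u x y ≤ u := inf_le_right

theorem negl_nonneg [AddRightMono G] {u x : G} (hx : x ≤ u) : 0 ≤ negl u x := sub_nonneg.2 hx

theorem negl_le [AddLeftMono G] {u x : G} (hx : 0 ≤ x) : negl u x ≤ u := sub_le_self u hx

variable [AddLeftMono G] [AddRightMono G]

theorem nonneg_of_two_pow_nsmul_nonneg {a : G} : ∀ {k : ℕ}, 0 ≤ 2 ^ k • a → 0 ≤ a
  | 0, h => by simpa using h
  | k + 1, h => nonneg_of_two_pow_nsmul_nonneg <| nsmul_two_semiclosed <| by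
      rwa [← mul_nsmul', ← pow_succ']

/-- Every element is the difference of two elements of `[0, n • u]`, and an element of
`[0, (n + 1) • u]` splits as `c ⊓ u` plus an element of `[0, n • u]`. -/
theorem IsStrongUnit.mem_of_Icc_subset {u : G} (hu : IsStrongUnit u) (H : AddSubgroup G)
    (hH : ∀ x, 0 ≤ x → x ≤ u → x ∈ H) (g : G) : g ∈ H := by
  have hpos : ∀ n : ℕ, ∀ c, 0 ≤ c → c ≤ n • u → c ∈ H := by
    intro n
    induction n with
    | zero => intro c h0 h1; rw [le_antisymm (by simpa using h1) h0]; exact H.zero_mem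
    | succ n ih =>
      intro c h0 h1
      have hrest : -(c ⊓ u) + c = 0 ⊔ (-u + c) := by rw [neg_inf, sup_add, neg_add_cancel]
      rw [← add_neg_cancel_left (c ⊓ u) c]
      refine H.add_mem (hH _ (le_inf h0 hu.1) inf_le_right) (ih _ ?_ ?_) <;> rw [hrest]
      · exact le_sup_left
      · exact sup_le (nsmul_nonneg hu.1 n) (neg_add_le_iff_le_add.2 (succ_nsmul' u n ▸ h1))
  obtain ⟨n, -, hn⟩ := hu.2 (-g)
  have hg : 0 ≤ g + n • u := neg_le_iff_add_nonneg'.1 hn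
  obtain ⟨m, -, hm⟩ := hu.2 (g + n • u)
  rw [← add_sub_cancel_right g (n • u)]
  exact H.sub_mem (hpos m _ hg hm) (hpos n _ (nsmul_nonneg hu.1 n) le_rfl)

theorem IsStrongUnit.addCommute_of_forall_mem_Icc (hu : IsStrongUnit u) {h : G}
    (hh : ∀ x, 0 ≤ x → x ≤ u → AddCommute h x) (g : G) : AddCommute h g := by
  have := hu.mem_of_Icc_subset (AddSubgroup.centralizer {h}) (fun x hx0 hx1 =>
    AddSubgroup.mem_centralizer_iff.2 (by rintro _ rfl; exact hh x hx0 hx1)) g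
  exact AddSubgroup.mem_centralizer_iff.1 this h rfl

end LatticeGroup

section LinearGroup

variable {L : Type} [AddGroup L] [LinearOrder L] [AddLeftMono L] [AddRightMono L]

theorem le_add_self_of_min_add_self_le {a b c : L} (hba : b < a)
    (h : min (a + a) c ≤ min (b + b) c) : c ≤ b + b := by
  by_contra! hc
  rw [min_eq_left hc.le, min_le_iff] at h
  exact h.elim (not_le.2 (add_lt_add hba hba)) (not_le.2 hc)

/-- Truncating the doubling at `c` hides it only above `c`, where the complements `c - ·` take
over. -/
theorem le_of_min_add_self_le {a b c : L} (h₁ : min (a + a) c ≤ min (b + b) c)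
    (h₂ : min ((c - b) + (c - b)) c ≤ min ((c - a) + (c - a)) c) : a ≤ b := by
  by_contra! hba
  have hb : c ≤ b + b := le_add_self_of_min_add_self_le hba h₁
  have ha : c ≤ (c - a) + (c - a) := le_add_self_of_min_add_self_le (sub_lt_sub_left hba c) h₂
  rw [sub_eq_add_neg c a, add_assoc, le_add_iff_nonneg_right, le_neg_add_iff_add_le, add_zero,
    ← sub_eq_add_neg, le_sub_iff_add_le] at ha
  exact (hb.trans_lt (add_lt_add hba hba)).not_ge ha

end LinearGroup

section Representation

variable {G : Type} [Lattice G] [AddGroup G] [AddLeftMono G] [AddRightMono G]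

def DoublingReflectsLE (u : G) : Prop :=
  ∀ ⦃x y : G⦄, 0 ≤ x → x ≤ u → 0 ≤ y → y ≤ u → x + x ≤ y + y → x ≤ y

theorem le_iff_forall_apply_le {ι : Type} {K : ι → Type} [∀ i, AddGroup (K i)]
    [∀ i, LinearOrder (K i)] [∀ i, AddLeftMono (K i)] {u : G} {U : ∀ i, K i}
    {f : G → ∀ i, K i} (hfu : ∀ i, f u i = U i)
    (hfoplus : ∀ x y, 0 ≤ x → x ≤ u → 0 ≤ y → y ≤ u → ∀ i,
      f (oplus u x y) i = min (f x i + f y i) (U i))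
    (hfnegl : ∀ x, 0 ≤ x → x ≤ u → ∀ i, f (negl u x) i = U i - f x i)
    (hinj : ∀ x y, 0 ≤ x → x ≤ u → 0 ≤ y → y ≤ u → (∀ i, f x i = f y i) → x = y)
    {x y : G} (hx0 : 0 ≤ x) (hx1 : x ≤ u) (hy0 : 0 ≤ y) (hy1 : y ≤ u) :
    x ≤ y ↔ ∀ i, f x i ≤ f y i := by
  have hu0 : 0 ≤ u := hx0.trans hx1
  have hmap : ∀ i, f (oplus u (negl u x) y) i = oplus (U i) (negl (U i) (f x i)) (f y i) :=
    fun i => by rw [hfoplus _ _ (negl_nonneg hx1) (negl_le hx0) hy0 hy1, hfnegl x hx0 hx1]; rfl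
  rw [← oplus_negl_eq_iff_le]
  simp_rw [← oplus_negl_eq_iff_le (u := U _), ← hmap, ← hfu]
  exact ⟨fun h i => by rw [h], hinj _ _ (oplus_nonneg hu0 (negl_nonneg hx1) hy0)
    (oplus_le _ _ _) hu0 le_rfl⟩

theorem IsRepresentable.doublingReflectsLE {u : G} (hrep : IsRepresentable u)
    (hu : ∀ g, AddCommute u g) : DoublingReflectsLE u := by
  intro x y hx0 hx1 hy0 hy1 h
  obtain ⟨ι, K, f, -, -, hfu, hfoplus, hfnegl, -, hinj, -⟩ := hrep
  have hu0 : 0 ≤ u := hx0.trans hx1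
  have hle : ∀ {a b : G}, 0 ≤ a → a ≤ u → 0 ≤ b → b ≤ u →
      (a ≤ b ↔ ∀ i, f a i ≤ f b i) :=
    le_iff_forall_apply_le (U := fun i => (K i).u) hfu hfoplus hfnegl hinj
  have hcompl : negl u y + negl u y ≤ negl u x + negl u x := by
    rw [negl, negl, (AddCommute.refl y).sub_add_sub_comm (hu y).symm.neg_left,
      (AddCommute.refl x).sub_add_sub_comm (hu x).symm.neg_left]
    exact sub_le_sub_left h _
  have h₁ := (hle (oplus_nonneg hu0 hx0 hx0) (oplus_le _ _ _) (oplus_nonneg hu0 hy0 hy0)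
    (oplus_le _ _ _)).1 (inf_le_inf_right u h)
  have h₂ := (hle (oplus_nonneg hu0 (negl_nonneg hy1) (negl_nonneg hy1)) (oplus_le _ _ _)
    (oplus_nonneg hu0 (negl_nonneg hx1) (negl_nonneg hx1)) (oplus_le _ _ _)).1
    (inf_le_inf_right u hcompl)
  refine (hle hx0 hx1 hy0 hy1).2 fun i => le_of_min_add_self_le (c := (K i).u) ?_ ?_
  · simpa only [hfoplus _ _ hx0 hx1 hx0 hx1, hfoplus _ _ hy0 hy1 hy0 hy1] using h₁ i
  · simpa only [hfoplus _ _ (negl_nonneg hx1) (negl_le hx0) (negl_nonneg hx1) (negl_le hx0),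
      hfoplus _ _ (negl_nonneg hy1) (negl_le hy0) (negl_nonneg hy1) (negl_le hy0),
      hfnegl _ hx0 hx1, hfnegl _ hy0 hy1] using h₂ i

end Representation

section HalvingSquareRoot

variable {G : Type} [Lattice G] [AddGroup G] {u : G}

theorem dense_of_twoDivisible [AddLeftMono G] [AddRightMono G] (htd : TwoDivisible G)
    (hu : IsStrongUnit u) (hc : ∀ g, AddCommute u g) (g : G) (hg : 0 ≤ g) :
    ∃ (x : G) (n : ℕ), 0 ≤ x ∧ x ≤ u ∧ g = n • x := by
  obtain ⟨n, -, hn⟩ := hu.2 g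
  obtain ⟨x, hx⟩ := htd.exists_two_pow_nsmul_eq g n
  refine ⟨x, 2 ^ n, nonneg_of_two_pow_nsmul_nonneg (k := n) (hx ▸ hg),
    sub_nonneg.1 (nonneg_of_two_pow_nsmul_nonneg (k := n) ?_), hx.symm⟩
  rw [sub_eq_add_neg, (hc x).neg_right.add_nsmul, neg_nsmul, ← sub_eq_add_neg, hx, sub_nonneg]
  exact hn.trans (nsmul_le_nsmul_left hu.1 Nat.lt_two_pow_self.le)

theorem nonneg_of_add_self_eq_add [AddLeftMono G] [AddRightMono G] (hu0 : 0 ≤ u) {x s : G}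
    (hx : 0 ≤ x) (hs : s + s = x + u) : 0 ≤ s :=
  nsmul_two_semiclosed (by rw [two_nsmul, hs]; exact add_nonneg hx hu0)

theorem le_of_add_self_eq_add [AddLeftMono G] [AddRightMono G] (hu : ∀ g, AddCommute u g)
    {x s : G} (hx : x ≤ u) (hs : s + s = x + u) : s ≤ u := by
  refine sub_nonneg.1 (nsmul_two_semiclosed ?_)
  rw [two_nsmul, (AddCommute.refl s).sub_add_sub_comm (hu s).symm.neg_left, hs, sub_nonneg]
  exact add_le_add_left hx u

theorem odot_self_of_add_self_eq_add (hu : ∀ g, AddCommute u g) {x s : G} (hx : 0 ≤ x)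
    (hs : s + s = x + u) : odot u s s = x := by
  rw [odot, sub_add_self_of_addCommute (hu s), hs, add_sub_cancel_right, sup_eq_left.2 hx]

theorem DoublingReflectsLE.eq_of_add_self_eq (hcancel : DoublingReflectsLE u) {s t : G}
    (hs0 : 0 ≤ s) (hs1 : s ≤ u) (ht0 : 0 ≤ t) (ht1 : t ≤ u) (h : s + s = t + t) : s = t :=
  le_antisymm (hcancel hs0 hs1 ht0 ht1 h.le) (hcancel ht0 ht1 hs0 hs1 h.ge)

theorem DoublingReflectsLE.le_of_odot_self_le [AddRightMono G] (hcancel : DoublingReflectsLE u)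
    (hu : ∀ g, AddCommute u g) {x y s : G} (hy0 : 0 ≤ y) (hy1 : y ≤ u) (hs0 : 0 ≤ s)
    (hs1 : s ≤ u) (hs : s + s = x + u) (h : odot u y y ≤ x) : y ≤ s := by
  refine hcancel hy0 hy1 hs0 hs1 ?_
  rw [hs, ← sub_le_iff_le_add, ← sub_add_self_of_addCommute (hu y)]
  exact le_sup_left.trans h

theorem isSquareRoot_of_add_self_eq_add [AddLeftMono G] [AddRightMono G]
    (hcancel : DoublingReflectsLE u) {h : G} (hh : ∀ g, AddCommute h g) (hhu : h + h = u)
    (hu0 : 0 ≤ u) {r : G → G} (hr : ∀ x, r x + r x = x + u) :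
    IsSquareRoot u r ∧ IsStrict u r := by
  have hu : ∀ g, AddCommute u g := fun g => hhu ▸ (hh g).add_left (hh g)
  have hmem : ∀ x, 0 ≤ x → x ≤ u → 0 ≤ r x ∧ r x ≤ u := fun x hx0 hx1 =>
    ⟨nonneg_of_add_self_eq_add hu0 hx0 (hr x), le_of_add_self_eq_add hu hx1 (hr x)⟩
  have h0 : 0 ≤ h := nsmul_two_semiclosed (by rwa [two_nsmul, hhu])
  have h1 : h ≤ u := hhu ▸ le_add_of_nonneg_left h0
  have hr0 : r 0 = h := hcancel.eq_of_add_self_eq (hmem 0 le_rfl hu0).1 (hmem 0 le_rfl hu0).2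
    h0 h1 (by rw [hr, zero_add, hhu])
  have hneg : ∀ x, 0 ≤ x → x ≤ u →
      negl u (r x) + h ≤ u ∧ r (negl u x) = negl u (r x) + h := by
    intro x hx0 hx1
    have hle : negl u (r x) + h ≤ u := by
      rw [negl, sub_eq_add_neg, add_assoc]
      refine add_le_of_nonpos_right (neg_add_nonpos_iff.2 ?_)
      exact hcancel h0 h1 (hmem x hx0 hx1).1 (hmem x hx0 hx1).2
        (by rw [hhu, hr]; exact le_add_of_nonneg_left hx0)
    refine ⟨hle, hcancel.eq_of_add_self_eq (hmem _ (negl_nonneg hx1) (negl_le hx0)).1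
      (hmem _ (negl_nonneg hx1) (negl_le hx0)).2
      (add_nonneg (negl_nonneg (hmem x hx0 hx1).2) h0) hle ?_⟩
    rw [hr, (hh _).add_add_add_comm, hhu, negl, negl,
      (AddCommute.refl _).sub_add_sub_comm (hu _).symm.neg_left, hr, add_sub_add_right_eq_sub]
  have hnegr : ∀ x, negr u x = negl u x := fun x =>
    (hu x).neg_right.eq.symm.trans (sub_eq_add_neg u x).symm
  refine ⟨⟨hmem, fun x hx0 _ => odot_self_of_add_self_eq_add hu hx0 (hr x),
    fun x y hx0 hx1 hy0 hy1 => hcancel.le_of_odot_self_le hu hy0 hy1 (hmem x hx0 hx1).1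
      (hmem x hx0 hx1).2 (hr x), fun x hx0 hx1 => ?_, fun x hx0 hx1 => ?_⟩, ?_⟩
  · rw [hr0, (hneg x hx0 hx1).2, oplus, inf_eq_left.2 (hneg x hx0 hx1).1]
  · rw [hr0, hnegr, hnegr, (hneg x hx0 hx1).2, oplus, (hh _).eq,
      inf_eq_left.2 (hneg x hx0 hx1).1]
  · rw [IsStrict, hr0, negl, eq_sub_iff_add_eq, hhu]

end HalvingSquareRoot

namespace IsSquareRoot

variable {G : Type} [Lattice G] [AddGroup G] {u : G} {r : G → G}

theorem apply_zero_le_s10 (hr : IsSquareRoot u r) (hs : IsStrict u r) {x : G} (hx0 : 0 ≤ x)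
    (hx1 : x ≤ u) : r 0 ≤ r x := by
  have hu0 : 0 ≤ u := hx0.trans hx1
  refine hr.2.2.1 x (r 0) hx0 hx1 (hr.1 0 le_rfl hu0).1 (hr.1 0 le_rfl hu0).2 ?_
  rw [odot, sub_add_self_eq_zero_of_add_self_eq hs.add_self, sup_idem]
  exact hx0

theorem sub_add_self [AddLeftMono G] [AddRightMono G]
    (hr : IsSquareRoot u r) (hs : IsStrict u r) {x : G} (hx0 : 0 ≤ x)
    (hx1 : x ≤ u) : r x - u + r x = x := by
  have h := hr.2.1 x hx0 hx1
  rwa [odot, sup_eq_left.2] at h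
  rw [← sub_add_self_eq_zero_of_add_self_eq hs.add_self]
  exact add_le_add (sub_le_sub_right (hr.apply_zero_le_s10 hs hx0 hx1) u) (hr.apply_zero_le_s10 hs hx0 hx1)

/-- (Sq1) at `x⁻`, rewritten by (Sq3) and by (Sq1) at `x`, cancels down to
`-r x + r 0 = r 0 - r x`. -/
theorem addCommute_apply_zero_apply [AddLeftMono G] [AddRightMono G]
    (hr : IsSquareRoot u r) (hs : IsStrict u r) {x : G}
    (hx0 : 0 ≤ x) (hx1 : x ≤ u) : AddCommute (r 0) (r x) := by
  have hneg : r (negl u x) = negl u (r x) + r 0 := by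
    rw [hr.2.2.2.1 x hx0 hx1, oplus, inf_eq_left, negl, sub_eq_add_neg, add_assoc]
    exact add_le_of_nonpos_right (neg_add_nonpos_iff.2 (hr.apply_zero_le_s10 hs hx0 hx1))
  have h : negl u (r x) + r 0 - u + (negl u (r x) + r 0) = negl u (r x - u + r x) := by
    rw [hr.sub_add_self hs hx0 hx1, ← hneg, hr.sub_add_self hs (negl_nonneg hx1) (negl_le hx0)]
  rw [negl, negl, ← hs.add_self] at h
  simp only [sub_eq_add_neg, neg_add_rev, neg_neg, add_assoc, add_neg_cancel_left,
    neg_add_cancel_left, add_right_inj] at h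
  simpa using (show AddCommute (r 0) (-r x) from h.symm).neg_right

theorem addCommute_apply_zero [AddLeftMono G] [AddRightMono G]
    (hr : IsSquareRoot u r) (hs : IsStrict u r) {x : G} (hx0 : 0 ≤ x)
    (hx1 : x ≤ u) : AddCommute (r 0) x := by
  have hc := hr.addCommute_apply_zero_apply hs hx0 hx1
  rw [← hr.sub_add_self hs hx0 hx1, sub_eq_add_neg, ← hs.add_self]
  exact (hc.add_right ((AddCommute.refl _).add_right (AddCommute.refl _)).neg_right).add_right hc

theorem sub_apply_zero_add_self [AddLeftMono G] [AddRightMono G]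
    (hr : IsSquareRoot u r) (hs : IsStrict u r) {x : G}
    (hx0 : 0 ≤ x) (hx1 : x ≤ u) : (r x - r 0) + (r x - r 0) = x := by
  have hc := hr.addCommute_apply_zero_apply hs hx0 hx1
  rw [(AddCommute.refl _).sub_add_sub_comm hc.neg_left, hs.add_self,
    ← sub_add_self_of_addCommute (hs.add_self ▸ hc.add_left hc), hr.sub_add_self hs hx0 hx1]

end IsSquareRoot

theorem twoDivisible_of_dense {G : Type} [Lattice G] [AddGroup G] [AddLeftMono G] {u : G}
    (hu : IsStrongUnit u) {h : G} (hh : ∀ g, AddCommute h g)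
    (hhu : h + h = u)
    (hdense : ∀ g : G, 0 ≤ g → ∃ (x : G) (n : ℕ), 0 ≤ x ∧ x ≤ u ∧ g = n • x)
    (hhalf : ∀ x, 0 ≤ x → x ≤ u → ∃ c, c + c = x) : TwoDivisible G := by
  intro g
  obtain ⟨n, -, hn⟩ := hu.2 (-g)
  obtain ⟨x, m, hx0, hx1, hgx⟩ := hdense _ (neg_le_iff_add_nonneg'.1 hn)
  obtain ⟨c, rfl⟩ := hhalf x hx0 hx1
  refine ⟨m • c - n • h, ?_⟩
  rw [(AddCommute.refl _).sub_add_sub_comm ((hh (m • c)).nsmul_left n).neg_left,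
    ← (AddCommute.refl c).add_nsmul, ← (AddCommute.refl h).add_nsmul, hhu, ← hgx,
    add_sub_cancel_right]

/-- for a representable pseudo MV-algebra `M = Γ(G,u)`:
`G` is two-divisible with `u/2 ∈ C(G)` iff `M` is dense in `G` and `M` has a strict
square root. -/
theorem stmt_10 {G : Type} [Lattice G] [AddGroup G]
    [CovariantClass G G (· + ·) (· ≤ ·)]
    [CovariantClass G G (Function.swap (· + ·)) (· ≤ ·)]
    (u : G) (hu : IsStrongUnit u) (hrep : IsRepresentable u) :
    (TwoDivisible G ∧ ∃ h : G, (∀ g : G, h + g = g + h) ∧ h + h = u) ↔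
    ((∀ g : G, 0 ≤ g → ∃ (x : G) (n : ℕ), 0 ≤ x ∧ x ≤ u ∧ g = n • x) ∧
     ∃ r : G → G, IsSquareRoot u r ∧ IsStrict u r) := by
  constructor
  · rintro ⟨htd, h, hh, hhu⟩
    have hh : ∀ g, AddCommute h g := hh
    have hcu : ∀ g, AddCommute u g := fun g => hhu ▸ (hh g).add_left (hh g)
    have hdense := dense_of_twoDivisible htd hu hcu
    choose half hhalf using htd
    exact ⟨hdense, fun x => half (x + u), isSquareRoot_of_add_self_eq_add
      (hrep.doublingReflectsLE hcu) hh hhu hu.1 fun x => hhalf (x + u)⟩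
  · rintro ⟨hdense, r, hr, hs⟩
    have hc : ∀ g, AddCommute (r 0) g :=
      hu.addCommute_of_forall_mem_Icc fun _ hx0 hx1 => hr.addCommute_apply_zero hs hx0 hx1
    exact ⟨twoDivisible_of_dense hu hc hs.add_self hdense fun _ hx0 hx1 =>
      ⟨_, hr.sub_apply_zero_add_self hs hx0 hx1⟩, r 0, hc, hs.add_self⟩
end
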